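/- Let (σ,τ̄) be a persistence pair in the cone filtration pairing a base simplex σ with a cone simplex τ̄ = ω∗τ, with min σ = b < d = max τ (low R[τ̄] = σ). Let z = V[τ̄] ∩ K_{≥b}. Then: (1) ∂z is supported on K_{≤b} ∪ K_{≥d}, so z is a relative cycle of the pair K(b,d) = (K, K_{≤b} ∪ K_{≥d}) with [z] ∈ H(K(b,d)); (2) the chain w_init = −∂(V[τ̄] ∩ (K̄ − K) + V[τ̄] ∩ K_{≥b}) is supported on K[b,b] = K_{≥b} ∩ K_{≤b} and σ has nonzero coefficient in w_init; (3) τ has nonzero coefficient in w_init + ∂z = −∂(V[τ̄] ∩ (K̄ − K)). -/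
import Mathlib


open Finsupp
open scoped Classical

/-- A finite Δ-complex over a field `F`: each cell has a dimension, a boundary chain,
and an integer support interval `T(σ) = [tmin σ, tmax σ] ⊆ [0, n]`; whenever `σ` appears
in `∂τ` one has `tmin σ < tmin τ < tmax τ < tmax σ`. -/
structure DeltaComplex (F : Type) [Field F] (n : ℤ) where
  Cell : Type
  deq : DecidableEq Cell
  fin : Fintype Cell
  dim : Cell → ℕ
  tmin : Cell → ℤ
  tmax : Cell → ℤ
  bdry : Cell → (Cell →₀ F)
  tmin_nonneg : ∀ σ, 0 ≤ tmin σ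
  tmin_lt_tmax : ∀ σ, tmin σ < tmax σ
  tmax_le : ∀ σ, tmax σ ≤ n
  bdry_dim : ∀ τ σ, bdry τ σ ≠ 0 → dim σ + 1 = dim τ
  nest : ∀ τ σ, bdry τ σ ≠ 0 → tmin σ < tmin τ ∧ tmax τ < tmax σ
  bdry_bdry : ∀ τ, ((bdry τ).sum fun σ a => a • bdry σ) = 0

attribute [instance] DeltaComplex.deq DeltaComplex.fin

variable {F : Type} [Field F] {n : ℤ}

/-- The boundary of a chain of `K`. -/
noncomputable def bd (K : DeltaComplex F n) (c : K.Cell →₀ F) : K.Cell →₀ F :=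
  c.sum fun τ a => a • K.bdry τ

/-- A chain is supported on a set of cells. -/
def SuppOn {α β : Type} [Zero β] (c : α →₀ β) (S : α → Prop) : Prop :=
  ∀ x, c x ≠ 0 → S x

/-- Cells of the prism `K̂`: vertical cells `σ×{i}` and horizontal cells `σ×[i,i+1]`. -/
inductive PCell (C : Type) where
  | vert : C → ℤ → PCell C
  | horiz : C → ℤ → PCell C
deriving DecidableEq

/-- Membership of a prism cell in the prism `K̂`. -/
def inPrism (K : DeltaComplex F n) : PCell K.Cell → Prop
  | .vert σ i => K.tmin σ ≤ i ∧ i ≤ K.tmax σ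
  | .horiz σ i => K.tmin σ ≤ i ∧ i + 1 ≤ K.tmax σ

/-- Membership of a prism cell in the interlevel subcomplex `K̂_i^j` (cells `σ×T` with
`T ⊆ [i,j]`). -/
def inSub (K : DeltaComplex F n) (i j : ℤ) : PCell K.Cell → Prop
  | .vert σ t => (K.tmin σ ≤ t ∧ t ≤ K.tmax σ) ∧ i ≤ t ∧ t ≤ j
  | .horiz σ t => (K.tmin σ ≤ t ∧ t + 1 ≤ K.tmax σ) ∧ i ≤ t ∧ t + 1 ≤ j

/-- The boundary of a single prism cell: `∂(τ×i) = (∂τ)×i` and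
`∂(σ×[i,i+1]) = σ×(i+1) − σ×i − (∂σ)×[i,i+1]`. -/
noncomputable def pcellBd (K : DeltaComplex F n) : PCell K.Cell → (PCell K.Cell →₀ F)
  | .vert τ i => (K.bdry τ).sum fun σ a => Finsupp.single (PCell.vert σ i) a
  | .horiz σ i =>
      Finsupp.single (PCell.vert σ (i + 1)) 1 - Finsupp.single (PCell.vert σ i) 1
        - (K.bdry σ).sum fun ρ a => Finsupp.single (PCell.horiz ρ i) a

/-- The boundary of a prism chain. -/
noncomputable def pbd (K : DeltaComplex F n) (c : PCell K.Cell →₀ F) : PCell K.Cell →₀ F :=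
  c.sum fun x a => a • pcellBd K x

/-- `z` is a relative cycle of the pair of subcomplexes `(A, B)` of the prism. -/
def RelCycle (K : DeltaComplex F n) (A B : PCell K.Cell → Prop)
    (z : PCell K.Cell →₀ F) : Prop :=
  SuppOn z A ∧ SuppOn (pbd K z) B

/-- The homology class `[z] ∈ H(A,B)` lies in the image of the map
`H(A',B') → H(A,B)` induced by the inclusion of pairs `(A',B') ⊆ (A,B)`:
there is a relative cycle `α` of `(A',B')` homologous to `z` within `(A,B)`. -/
def InImg (K : DeltaComplex F n) (A' B' A B : PCell K.Cell → Prop)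
    (z : PCell K.Cell →₀ F) : Prop :=
  ∃ α β γ : PCell K.Cell →₀ F,
    RelCycle K A' B' α ∧ SuppOn β A ∧ SuppOn γ B ∧ z = α + pbd K β + γ

/-- The vertical prism chain `w × t`. -/
noncomputable def vchain (K : DeltaComplex F n) (w : K.Cell →₀ F) (t : ℤ) :
    PCell K.Cell →₀ F :=
  w.sum fun σ a => Finsupp.single (PCell.vert σ t) a

/-- A valid choice of times for Lift-Cycle: for every simplex `τ` of `z` with
`T(τ) ∩ [b,d] ≠ ∅`, the chosen time satisfies `t τ ∈ T(τ) ∩ [b,d]`. -/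
def ValidTimes (K : DeltaComplex F n) (z : K.Cell →₀ F) (b d : ℤ) (t : K.Cell → ℤ) : Prop :=
  ∀ τ, z τ ≠ 0 → K.tmin τ ≤ d → b ≤ K.tmax τ →
    K.tmin τ ≤ t τ ∧ t τ ≤ K.tmax τ ∧ b ≤ t τ ∧ t τ ≤ d

/-- The chain `ẑ` produced by `Lift-Cycle(z, (s,f), w₀)` with the choice of times `t`
(here `b = min s f`, `d = max s f`): the sum of the vertical cells `⟨τ,z⟩·(τ×t_τ)` over
simplices `τ` of `z` with `T(τ) ∩ [b,d] ≠ ∅`, plus horizontal cells `σ×[k,k+1]`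
(oriented from `s` to `f`) whose coefficient is the running sum
`⟨σ,w₀⟩ + Σ ⟨τ,z⟩·⟨σ,∂τ⟩` over the cofaces `τ` whose time `t_τ` has already been passed
when traversing from `s` to `f`. -/
noncomputable def liftCycle (K : DeltaComplex F n) (z : K.Cell →₀ F) (s f : ℤ)
    (w0 : K.Cell →₀ F) (t : K.Cell → ℤ) : PCell K.Cell →₀ F :=
  (∑ τ ∈ z.support.filter (fun τ => K.tmin τ ≤ max s f ∧ min s f ≤ K.tmax τ),
      Finsupp.single (PCell.vert τ (t τ)) (z τ))
  + ∑ σ : K.Cell, ∑ k ∈ Finset.Icc (min s f) (max s f - 1),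
      Finsupp.single (PCell.horiz σ k)
        ((if s ≤ f then (1 : F) else -1) *
          (w0 σ +
            ∑ τ ∈ z.support.filter (fun τ =>
                (K.tmin τ ≤ max s f ∧ min s f ≤ K.tmax τ) ∧
                  (if s ≤ f then t τ ≤ k else k + 1 ≤ t τ)),
              z τ * (K.bdry τ) σ))

/-- Cells of the cone `K̄ = ω ∗ K`: base simplices, the cone vertex `ω`,
and cone simplices `σ̄ = ω ∗ σ`. -/
inductive CCell (C : Type) where
  | base : C → CCell C
  | omega : CCell C
  | cone : C → CCell C
deriving DecidableEq

/-- Boundary of a single cell of the cone `K̄`: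
`∂σ` for base simplices, `0` for `ω`, and `∂(ω∗σ) = σ − ω∗∂σ` (minus `ω` when `σ` is a
vertex) for cone simplices. -/
noncomputable def ccellBd (K : DeltaComplex F n) : CCell K.Cell → (CCell K.Cell →₀ F)
  | .base σ => (K.bdry σ).sum fun ρ a => Finsupp.single (CCell.base ρ) a
  | .omega => 0
  | .cone σ =>
      Finsupp.single (CCell.base σ) 1
        - (K.bdry σ).sum (fun ρ a => Finsupp.single (CCell.cone ρ) a)
        - (if K.dim σ = 0 then Finsupp.single CCell.omega 1 else 0)

/-- The boundary of a chain of the cone `K̄`. -/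
noncomputable def cbd (K : DeltaComplex F n) (c : CCell K.Cell →₀ F) : CCell K.Cell →₀ F :=
  c.sum fun x a => a • ccellBd K x

/-- The restriction `c ∩ K` of a cone chain to the base simplices, as a chain in `K`. -/
noncomputable def basePart (K : DeltaComplex F n) (c : CCell K.Cell →₀ F) : K.Cell →₀ F :=
  c.sum fun x a =>
    match x with
    | .base σ => Finsupp.single σ a
    | .omega => 0
    | .cone _ => 0

/-- The restriction `c ∩ (K̄ − K)` of a cone chain to the cells not in the base. -/
noncomputable def conePart (K : DeltaComplex F n) (c : CCell K.Cell →₀ F) :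
    CCell K.Cell →₀ F :=
  c.sum fun x a =>
    match x with
    | .base _ => 0
    | .omega => Finsupp.single CCell.omega a
    | .cone ρ => Finsupp.single (CCell.cone ρ) a

/-- The order of the cells of `K̄` in the cone filtration: base simplices by increasing
`min σ`, then `ω`, then cone simplices by decreasing `max σ`, ties broken consistently
so that every prefix is a subcomplex. -/
structure ConeOrder (K : DeltaComplex F n) where
  pos : CCell K.Cell → ℕ
  inj : Function.Injective pos
  base_lt_base : ∀ σ τ : K.Cell, K.tmin σ < K.tmin τ → pos (.base σ) < pos (.base τ)
  base_lt_omega : ∀ σ : K.Cell, pos (.base σ) < pos .omega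
  omega_lt_cone : ∀ σ : K.Cell, pos .omega < pos (.cone σ)
  cone_lt_cone : ∀ σ τ : K.Cell, K.tmax τ < K.tmax σ → pos (.cone σ) < pos (.cone τ)
  faces_first : ∀ x y, (ccellBd K x) y ≠ 0 → pos y < pos x

/-- `σ` is the pivot (lowest nonzero entry) of the column (chain) `c`. -/
def IsLow (K : DeltaComplex F n) (O : ConeOrder K) (c : CCell K.Cell →₀ F)
    (σ : CCell K.Cell) : Prop :=
  c σ ≠ 0 ∧ ∀ ρ, c ρ ≠ 0 → O.pos ρ ≤ O.pos σ

/-- `R = DV` is a decomposition of the boundary matrix `D` of the cone filtration: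
`V` is invertible upper-triangular and `R` is reduced (pivots of nonzero columns lie
in pairwise distinct rows). -/
structure IsReduction (K : DeltaComplex F n) (O : ConeOrder K)
    (R V : CCell K.Cell → (CCell K.Cell →₀ F)) : Prop where
  rdv : ∀ τ, R τ = cbd K (V τ)
  upper : ∀ τ ρ, (V τ) ρ ≠ 0 → O.pos ρ ≤ O.pos τ
  diag : ∀ τ, (V τ) τ ≠ 0
  reduced : ∀ τ τ' σ, τ ≠ τ' → IsLow K O (R τ) σ → ¬ IsLow K O (R τ') σ

/-- One run of the lazy (standard left-to-right) reduction of the column of `τ`: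
starting from a column `c` (with coefficient vector `v`), while the column is nonzero
and its pivot collides with the pivot of an earlier (already reduced) column, subtract
the appropriate scalar multiple of that column. -/
inductive LazyReduces (K : DeltaComplex F n) (O : ConeOrder K)
    (R V : CCell K.Cell → (CCell K.Cell →₀ F)) (τ : CCell K.Cell) :
    (CCell K.Cell →₀ F) → (CCell K.Cell →₀ F) →
      (CCell K.Cell →₀ F) → (CCell K.Cell →₀ F) → Prop
  | done (c v : CCell K.Cell →₀ F)
      (h : ∀ σ, IsLow K O c σ → ∀ τ', O.pos τ' < O.pos τ → ¬ IsLow K O (R τ') σ) :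
      LazyReduces K O R V τ c v c v
  | step (c v c' v' : CCell K.Cell →₀ F) (τ' σ : CCell K.Cell)
      (hlt : O.pos τ' < O.pos τ) (hc : IsLow K O c σ) (hr : IsLow K O (R τ') σ)
      (next : LazyReduces K O R V τ (c - (c σ / ((R τ') σ)) • R τ')
        (v - (c σ / ((R τ') σ)) • V τ') c' v') :
      LazyReduces K O R V τ c v c' v'

/-- `R = DV` is obtained by the lazy reduction: every column `R τ` (with coefficient
column `V τ`) is the result of the lazy reduction of the boundary column of `τ`,
columns being processed from left to right. -/
def IsLazyReduction (K : DeltaComplex F n) (O : ConeOrder K)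
    (R V : CCell K.Cell → (CCell K.Cell →₀ F)) : Prop :=
  ∀ τ, LazyReduces K O R V τ (ccellBd K τ) (Finsupp.single τ 1) (R τ) (V τ)

section AuxLemmas

variable {F : Type} [Field F] {n : ℤ}

lemma base_injective {C : Type} : Function.Injective (CCell.base : C → CCell C) :=
  fun a b h => by cases h; rfl

lemma sum_single_inj_apply {α β : Type} [DecidableEq β] (f : α → β)
    (hf : Function.Injective f) (c : α →₀ F) (ρ : α) :
    (c.sum fun r a => Finsupp.single (f r) a) (f ρ) = c ρ := by
  rw [show (c.sum fun r a => Finsupp.single (f r) a) = Finsupp.mapDomain f c from rfl]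
  exact Finsupp.mapDomain_apply hf c ρ

lemma sum_single_inj_apply_ne {α β : Type} [DecidableEq β] (f : α → β)
    (c : α →₀ F) (x : β) (hx : ∀ r, x ≠ f r) :
    (c.sum fun r a => Finsupp.single (f r) a) x = 0 := by
  rw [show (c.sum fun r a => Finsupp.single (f r) a) = Finsupp.mapDomain f c from rfl]
  exact Finsupp.mapDomain_notin_range _ _ (by rintro ⟨r, rfl⟩; exact hx r rfl)

lemma cbd_apply (K : DeltaComplex F n) (c : CCell K.Cell →₀ F) (x : CCell K.Cell) :
    cbd K c x = ∑ y ∈ c.support, c y * ccellBd K y x := by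
  rw [cbd, Finsupp.sum_apply, Finsupp.sum]
  simp [Finsupp.smul_apply]

lemma cbd_add (K : DeltaComplex F n) (a b : CCell K.Cell →₀ F) :
    cbd K (a + b) = cbd K a + cbd K b := by
  unfold cbd
  exact Finsupp.sum_add_index' (fun x => by simp) (fun x b1 b2 => add_smul b1 b2 _)

lemma ccellBd_base_apply_base (K : DeltaComplex F n) (τ' ρ : K.Cell) :
    ccellBd K (.base τ') (.base ρ) = K.bdry τ' ρ :=
  sum_single_inj_apply CCell.base base_injective (K.bdry τ') ρ

lemma ccellBd_base_ne (K : DeltaComplex F n) (τ' : K.Cell) (x : CCell K.Cell)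
    (h : ccellBd K (.base τ') x ≠ 0) :
    ∃ ρ, x = CCell.base ρ ∧ K.bdry τ' ρ ≠ 0 := by
  cases x with
  | base ρ => exact ⟨ρ, rfl, by rwa [ccellBd_base_apply_base] at h⟩
  | omega =>
      exact absurd (sum_single_inj_apply_ne CCell.base (K.bdry τ') CCell.omega
        (fun r => by simp)) h
  | cone ρ =>
      exact absurd (sum_single_inj_apply_ne CCell.base (K.bdry τ') (CCell.cone ρ)
        (fun r => by simp)) h

lemma ccellBd_cone_apply_base (K : DeltaComplex F n) (τ' ρ : K.Cell) :
    ccellBd K (.cone τ') (.base ρ) = if τ' = ρ then 1 else 0 := by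
  rw [ccellBd]
  rw [Finsupp.sub_apply, Finsupp.sub_apply,
    sum_single_inj_apply_ne CCell.cone (K.bdry τ') (CCell.base ρ) (fun r => by simp),
    Finsupp.single_apply]
  have h0 : ((if K.dim τ' = 0 then Finsupp.single CCell.omega (1:F) else 0))
      (CCell.base ρ) = 0 := by
    split_ifs <;> simp [Finsupp.single_apply]
  rw [h0]
  by_cases h : τ' = ρ <;> simp [h]

lemma conePart_apply_base (K : DeltaComplex F n) (c : CCell K.Cell →₀ F) (ρ : K.Cell) :
    conePart K c (.base ρ) = 0 := by
  rw [conePart, Finsupp.sum_apply]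
  apply Finset.sum_eq_zero
  intro y _
  cases y <;> simp [Finsupp.single_apply]

lemma conePart_apply_omega (K : DeltaComplex F n) (c : CCell K.Cell →₀ F) :
    conePart K c CCell.omega = c CCell.omega := by
  rw [conePart, Finsupp.sum_apply, Finsupp.sum]
  rw [Finset.sum_eq_single CCell.omega]
  · simp
  · intro y _ hne
    cases y with
    | base ρ' => simp
    | omega => exact absurd rfl hne
    | cone ρ' => simp [Finsupp.single_apply]
  · intro h
    rw [Finsupp.notMem_support_iff] at h
    simp [h]

lemma conePart_apply_cone (K : DeltaComplex F n) (c : CCell K.Cell →₀ F) (ρ : K.Cell) :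
    conePart K c (.cone ρ) = c (.cone ρ) := by
  rw [conePart, Finsupp.sum_apply, Finsupp.sum]
  rw [Finset.sum_eq_single (CCell.cone ρ)]
  · simp
  · intro y _ hne
    cases y with
    | base ρ' => simp
    | omega => simp [Finsupp.single_apply]
    | cone ρ' =>
        rw [Finsupp.single_apply, if_neg]
        intro h; exact hne (by cases h; rfl)
  · intro h
    rw [Finsupp.notMem_support_iff] at h
    simp [h]

lemma cbd_ne_exists (K : DeltaComplex F n) (c : CCell K.Cell →₀ F) (x : CCell K.Cell)
    (h : cbd K c x ≠ 0) : ∃ y, c y ≠ 0 ∧ ccellBd K y x ≠ 0 := by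
  rw [cbd_apply] at h
  obtain ⟨y, _, hne⟩ := Finset.exists_ne_zero_of_sum_ne_zero h
  exact ⟨y, left_ne_zero_of_mul hne, right_ne_zero_of_mul hne⟩

/-- The boundary of the cone part of `c`, evaluated at a base cell `ρ`,
equals the coefficient of `c` on `ω∗ρ`. -/
lemma cbd_conePart_apply_base (K : DeltaComplex F n) (c : CCell K.Cell →₀ F) (ρ : K.Cell) :
    cbd K (conePart K c) (.base ρ) = c (.cone ρ) := by
  rw [cbd_apply]
  rw [Finset.sum_eq_single (CCell.cone ρ)]
  · rw [conePart_apply_cone, ccellBd_cone_apply_base, if_pos rfl, mul_one]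
  · intro y _ hne
    cases y with
    | base ρ' => rw [conePart_apply_base, zero_mul]
    | omega => rw [show ccellBd K CCell.omega = 0 from rfl]; simp
    | cone ρ' =>
        rw [ccellBd_cone_apply_base, if_neg (fun h => hne (by cases h; rfl)), mul_zero]
  · intro h
    rw [Finsupp.notMem_support_iff] at h
    rw [h, zero_mul]

end AuxLemmas

/-- Claim (extended closed-closed structure): let `(σ,τ̄)` be a persistence pair pairing a
base simplex `σ` with a cone simplex `τ̄ = ω∗τ`, with `min σ = b < d = max τ`
(`low R[τ̄] = σ`), and let `z = V[τ̄] ∩ K_{≥b}`. Then (1) `∂z` is supported on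
`K_{≤b} ∪ K_{≥d}` (so `z` is a relative cycle of the pair `K(b,d) = (K, K_{≤b} ∪ K_{≥d})`);
(2) `w_init = −∂(V[τ̄] ∩ (K̄ − K) + V[τ̄] ∩ K_{≥b})` is supported on
`K[b,b] = K_{≥b} ∩ K_{≤b}` and `σ` has nonzero coefficient in `w_init`; and (3) `τ` has
nonzero coefficient in `w_init + ∂z = −∂(V[τ̄] ∩ (K̄ − K))`. -/
theorem statement_19 {F : Type} [Field F] {n : ℤ} (K : DeltaComplex F n) (O : ConeOrder K)
    (R V : CCell K.Cell → (CCell K.Cell →₀ F)) (hRV : IsReduction K O R V)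
    (σ τ : K.Cell) (b d : ℤ) (hb : K.tmin σ = b) (hd : K.tmax τ = d) (hbd : b < d)
    (hlow : IsLow K O (R (CCell.cone τ)) (CCell.base σ)) :
    SuppOn (cbd K ((V (CCell.cone τ)).filter
          (fun x => ∃ ρ : K.Cell, x = CCell.base ρ ∧ b ≤ K.tmax ρ)))
        (fun x => ∃ ρ : K.Cell, x = CCell.base ρ ∧ (K.tmin ρ ≤ b ∨ d ≤ K.tmax ρ))
    ∧ SuppOn (-(cbd K (conePart K (V (CCell.cone τ))
          + (V (CCell.cone τ)).filter
              (fun x => ∃ ρ : K.Cell, x = CCell.base ρ ∧ b ≤ K.tmax ρ))))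
        (fun x => ∃ ρ : K.Cell, x = CCell.base ρ ∧ b ≤ K.tmax ρ ∧ K.tmin ρ ≤ b)
    ∧ (-(cbd K (conePart K (V (CCell.cone τ))
          + (V (CCell.cone τ)).filter
              (fun x => ∃ ρ : K.Cell, x = CCell.base ρ ∧ b ≤ K.tmax ρ))))
        (CCell.base σ) ≠ 0
    ∧ (-(cbd K (conePart K (V (CCell.cone τ))
          + (V (CCell.cone τ)).filter
              (fun x => ∃ ρ : K.Cell, x = CCell.base ρ ∧ b ≤ K.tmax ρ))))
          + cbd K ((V (CCell.cone τ)).filter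
              (fun x => ∃ ρ : K.Cell, x = CCell.base ρ ∧ b ≤ K.tmax ρ))
        = -(cbd K (conePart K (V (CCell.cone τ))))
    ∧ ((-(cbd K (conePart K (V (CCell.cone τ))
          + (V (CCell.cone τ)).filter
              (fun x => ∃ ρ : K.Cell, x = CCell.base ρ ∧ b ≤ K.tmax ρ))))
          + cbd K ((V (CCell.cone τ)).filter
              (fun x => ∃ ρ : K.Cell, x = CCell.base ρ ∧ b ≤ K.tmax ρ)))
        (CCell.base τ) ≠ 0 := by

  classical
  set W := V (CCell.cone τ) with hWdef
  set Pz : CCell K.Cell → Prop :=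
    fun x => ∃ ρ : K.Cell, x = CCell.base ρ ∧ b ≤ K.tmax ρ with hPz
  set Py : CCell K.Cell → Prop :=
    fun x => ∃ ρ : K.Cell, x = CCell.base ρ ∧ ¬ b ≤ K.tmax ρ with hPy
  set z := W.filter Pz with hzdef
  set yf := W.filter Py with hyfdef
  set cp := conePart K W with hcpdef
  -- R(cone τ) = ∂W
  have hR : R (CCell.cone τ) = cbd K W := hRV.rdv _
  -- support of ∂W: base cells with tmin ≤ b
  have hW_supp : ∀ x, cbd K W x ≠ 0 → ∃ ρ, x = CCell.base ρ ∧ K.tmin ρ ≤ b := by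
    intro x hx
    have hx' : R (CCell.cone τ) x ≠ 0 := by rw [hR]; exact hx
    have hpos := hlow.2 x hx'
    cases x with
    | base ρ =>
        refine ⟨ρ, rfl, ?_⟩
        by_contra h
        push_neg at h
        rw [← hb] at h
        have := O.base_lt_base σ ρ h
        omega
    | omega =>
        have := O.base_lt_omega σ
        omega
    | cone ρ =>
        have h1 := O.base_lt_omega σ
        have h2 := O.omega_lt_cone ρ
        omega
  -- cone coefficients of W have tmax ≥ d
  have hW_cone : ∀ ρ, W (CCell.cone ρ) ≠ 0 → d ≤ K.tmax ρ := by
    intro ρ hρ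
    have hu := hRV.upper (CCell.cone τ) (CCell.cone ρ) hρ
    by_contra h
    push_neg at h
    rw [← hd] at h
    have := O.cone_lt_cone τ ρ h
    omega
  -- support of ∂z: base cells with tmax ≥ b
  have hz_supp : ∀ x, cbd K z x ≠ 0 → ∃ ρ, x = CCell.base ρ ∧ b ≤ K.tmax ρ := by
    intro x hx
    obtain ⟨y, hy, hby⟩ := cbd_ne_exists K z x hx
    rw [hzdef, Finsupp.filter_apply] at hy
    split_ifs at hy with hp
    · obtain ⟨τ', rfl, hτ'⟩ := hp
      obtain ⟨ρ, rfl, hbd'⟩ := ccellBd_base_ne K τ' x hby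
      have := K.nest τ' ρ hbd'
      exact ⟨ρ, rfl, by omega⟩
    · exact absurd rfl hy
  -- support of ∂yf: base cells with tmin ≤ b
  have hy_supp : ∀ x, cbd K yf x ≠ 0 → ∃ ρ, x = CCell.base ρ ∧ K.tmin ρ ≤ b := by
    intro x hx
    obtain ⟨y, hy, hby⟩ := cbd_ne_exists K yf x hx
    rw [hyfdef, Finsupp.filter_apply] at hy
    split_ifs at hy with hp
    · obtain ⟨τ', rfl, hτ'⟩ := hp
      obtain ⟨ρ, rfl, hbd'⟩ := ccellBd_base_ne K τ' x hby
      have h1 := K.nest τ' ρ hbd'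
      have h2 := K.tmin_lt_tmax τ'
      exact ⟨ρ, rfl, by omega⟩
    · exact absurd rfl hy
  -- ∂cp at base ρ is W(cone ρ); nonzero needs tmax ρ ≥ d
  have hcp_base : ∀ ρ, cbd K cp (CCell.base ρ) = W (CCell.cone ρ) := by
    intro ρ
    exact cbd_conePart_apply_base K W ρ
  have hcp_supp : ∀ ρ, cbd K cp (CCell.base ρ) ≠ 0 → d ≤ K.tmax ρ := by
    intro ρ h
    rw [hcp_base] at h
    exact hW_cone ρ h
  -- decomposition W = z + yf + cp
  have hWsplit : W = z + yf + cp := by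
    ext x
    rw [Finsupp.add_apply, Finsupp.add_apply, hzdef, hyfdef, hcpdef,
      Finsupp.filter_apply, Finsupp.filter_apply]
    cases x with
    | base ρ =>
        rw [conePart_apply_base]
        by_cases h : b ≤ K.tmax ρ
        · rw [if_pos ⟨ρ, rfl, h⟩, if_neg, add_zero, add_zero]
          rintro ⟨ρ', hρ', h'⟩
          cases hρ'
          exact h' h
        · rw [if_neg, if_pos ⟨ρ, rfl, h⟩, zero_add, add_zero]
          rintro ⟨ρ', hρ', h'⟩
          cases hρ'
          exact h h'
    | omega =>
        rw [conePart_apply_omega, if_neg, if_neg, zero_add, zero_add]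
        · rintro ⟨ρ', hρ', -⟩; exact absurd hρ' (by simp)
        · rintro ⟨ρ', hρ', -⟩; exact absurd hρ' (by simp)
    | cone ρ =>
        rw [conePart_apply_cone, if_neg, if_neg, zero_add, zero_add]
        · rintro ⟨ρ', hρ', -⟩; exact absurd hρ' (by simp)
        · rintro ⟨ρ', hρ', -⟩; exact absurd hρ' (by simp)
  have hbd_split : cbd K W = cbd K z + cbd K yf + cbd K cp := by
    rw [hWsplit, cbd_add, cbd_add]
  -- Part (4): algebraic identity
  have part4 : (-(cbd K (cp + z))) + cbd K z = -(cbd K cp) := by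
    rw [cbd_add]; abel
  -- Part (1)
  have part1 : SuppOn (cbd K z)
      (fun x => ∃ ρ : K.Cell, x = CCell.base ρ ∧ (K.tmin ρ ≤ b ∨ d ≤ K.tmax ρ)) := by
    intro x hx
    obtain ⟨ρ, rfl, -⟩ := hz_supp x hx
    have hval : cbd K W (CCell.base ρ) =
        cbd K z (CCell.base ρ) + cbd K yf (CCell.base ρ) + cbd K cp (CCell.base ρ) := by
      rw [hbd_split]; simp
    have hcases : cbd K W (CCell.base ρ) ≠ 0 ∨ cbd K yf (CCell.base ρ) ≠ 0 ∨
        cbd K cp (CCell.base ρ) ≠ 0 := by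
      by_contra h
      push_neg at h
      obtain ⟨h1, h2, h3⟩ := h
      rw [h1, h2, h3, add_zero, add_zero] at hval
      exact hx hval.symm
    rcases hcases with h | h | h
    · obtain ⟨ρ', hρ', hle⟩ := hW_supp _ h
      cases base_injective hρ'
      exact ⟨ρ, rfl, Or.inl hle⟩
    · obtain ⟨ρ', hρ', hle⟩ := hy_supp _ h
      cases base_injective hρ'
      exact ⟨ρ, rfl, Or.inl hle⟩
    · exact ⟨ρ, rfl, Or.inr (hcp_supp ρ h)⟩
  -- ∂(cp+z) = ∂W − ∂yf
  have hcpz : cbd K (cp + z) = cbd K W - cbd K yf := by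
    rw [hbd_split, cbd_add]; abel
  -- Part (2)
  have part2 : SuppOn (-(cbd K (cp + z)))
      (fun x => ∃ ρ : K.Cell, x = CCell.base ρ ∧ b ≤ K.tmax ρ ∧ K.tmin ρ ≤ b) := by
    intro x hx
    rw [Finsupp.neg_apply, neg_ne_zero] at hx
    -- x is a base cell with tmin ≤ b
    have hx1 : cbd K W x ≠ 0 ∨ cbd K yf x ≠ 0 := by
      by_contra h
      push_neg at h
      have : cbd K (cp + z) x = 0 := by
        rw [hcpz, Finsupp.sub_apply, h.1, h.2, sub_zero]
      exact hx this
    have hbase : ∃ ρ, x = CCell.base ρ ∧ K.tmin ρ ≤ b := by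
      rcases hx1 with h | h
      · exact hW_supp x h
      · exact hy_supp x h
    obtain ⟨ρ, rfl, hmin⟩ := hbase
    -- tmax ρ ≥ b
    have hx2 : cbd K cp (CCell.base ρ) ≠ 0 ∨ cbd K z (CCell.base ρ) ≠ 0 := by
      by_contra h
      push_neg at h
      have : cbd K (cp + z) (CCell.base ρ) = 0 := by
        rw [cbd_add, Finsupp.add_apply, h.1, h.2, add_zero]
      exact hx this
    have hmax : b ≤ K.tmax ρ := by
      rcases hx2 with h | h
      · have := hcp_supp ρ h; omega
      · obtain ⟨ρ', hρ', hle⟩ := hz_supp _ h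
        cases base_injective hρ'
        exact hle
    exact ⟨ρ, rfl, hmax, hmin⟩
  -- ∂yf vanishes at base σ
  have hyf_sigma : cbd K yf (CCell.base σ) = 0 := by
    rw [cbd_apply]
    apply Finset.sum_eq_zero
    intro y hy
    rw [Finsupp.mem_support_iff, hyfdef, Finsupp.filter_apply] at hy
    split_ifs at hy with hp
    · obtain ⟨τ', rfl, hτ'⟩ := hp
      rw [ccellBd_base_apply_base]
      have hz0 : K.bdry τ' σ = 0 := by
        by_contra h
        have h1 := K.nest τ' σ h
        have h2 := K.tmin_lt_tmax τ'
        omega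
      rw [hz0, mul_zero]
    · exact absurd rfl hy
  -- Part (3): σ has nonzero coefficient in w_init
  have part3 : (-(cbd K (cp + z))) (CCell.base σ) ≠ 0 := by
    rw [Finsupp.neg_apply, neg_ne_zero, hcpz, Finsupp.sub_apply, hyf_sigma, sub_zero,
      ← hR]
    exact hlow.1
  -- Part (5): τ has nonzero coefficient in w_init + ∂z
  have part5 : ((-(cbd K (cp + z))) + cbd K z) (CCell.base τ) ≠ 0 := by
    rw [part4, Finsupp.neg_apply, neg_ne_zero, hcp_base]
    exact hRV.diag (CCell.cone τ)
  exact ⟨part1, part2, part3, part4, part5⟩
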